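/- arXiv:2406.04395 — 2 statements merged into one kernel-verified Lean document; each statement's English description precedes it below -/
import Mathlib

section
/- (Corollary 1: MUBs give the tightest bound.) For any choice of the m orthonormal bases, λ(C) ≥ 1, and if the bases are pairwise mutually unbiased (i.e., |⟨e^z_a, e^{z'}_{a'}⟩|² = 1/d for all z ≠ z' and all a, a'), then λ(C) = 1 and T(C) = 1. Consequently, for every 1 ≤ k ≤ d, the bound B_k = k(m − T(C))/d + T(C) satisfies B_k ≥ k(m − 1)/d + 1, with equality when the bases are pairwise mutually unbiased. -/
open Matrix BigOperators

/-- `c^{z,z'}_min = min_{a,a'} |⟨e^z_a, e^{z'}_{a'}⟩|²`. -/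
noncomputable def cminP (d m : ℕ) (e : Fin m → Fin d → Fin d → ℂ) (z z' : Fin m) : ℝ :=
  ⨅ q : Fin d × Fin d, ‖star (e z q.1) ⬝ᵥ e z' q.2‖ ^ 2

/-- `G^{z,z'} = 1 − (d+1)c^{z,z'}_min + (1/d)Σ_{a,a'} |⟨e^z_a, e^{z'}_{a'}⟩|⁴`. -/
noncomputable def GP (d m : ℕ) (e : Fin m → Fin d → Fin d → ℂ) (z z' : Fin m) : ℝ :=
  1 - ((d : ℝ) + 1) * cminP d m e z z' +
    (1 / d) * ∑ a : Fin d, ∑ a' : Fin d, ‖star (e z a) ⬝ᵥ e z' a'‖ ^ 4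

/-- `λ(C) = (1/2)(1 + √(1 + 2d Σ_{z≠z'} G^{z,z'}))`. -/
noncomputable def lamC (d m : ℕ) (e : Fin m → Fin d → Fin d → ℂ) : ℝ :=
  (1 + Real.sqrt (1 + 2 * d *
    ∑ z : Fin m, ∑ z' : Fin m, if z = z' then 0 else GP d m e z z')) / 2

/-- `T(C) = min{λ(C), m}`. -/
noncomputable def TCval (d m : ℕ) (e : Fin m → Fin d → Fin d → ℂ) : ℝ :=
  min (lamC d m e) m

/-
Parseval's identity for the orthonormal basis `e z'` gives `∑_{a'} |⟨e^z_a, e^{z'}_{a'}⟩|² = 1`,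
so the d² overlaps of two bases sum to d. Their minimum is therefore at most 1/d and, by
Cauchy–Schwarz, the sum of their squares is at least 1; these two bounds make every `G^{z,z'}`
nonnegative, whence `λ(C) ≥ 1`. For mutually unbiased bases all overlaps equal 1/d and every
`G^{z,z'}` vanishes, so `λ(C) = T(C) = 1`. Finally `B_k` is nondecreasing in `T` as long as `k ≤ d`.
-/

open EuclideanSpace

theorem Orthonormal.sum_sq_norm_inner_left_of_card_eq_finrank {𝕜 E ι : Type*} [RCLike 𝕜]
    [NormedAddCommGroup E] [InnerProductSpace 𝕜 E] [FiniteDimensional 𝕜 E] [Fintype ι]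
    {v : ι → E} (hv : Orthonormal 𝕜 v) (hcard : Fintype.card ι = Module.finrank 𝕜 E) (x : E) :
    ∑ i, ‖inner 𝕜 x (v i)‖ ^ 2 = ‖x‖ ^ 2 := by
  let b := OrthonormalBasis.mk hv (hv.linearIndependent.span_eq_top_of_card_eq_finrank' hcard).ge
  simpa [b] using b.sum_sq_norm_inner_left x

theorem orthonormal_toLp_iff {𝕜 ι κ : Type*} [RCLike 𝕜] [Fintype κ] [DecidableEq ι]
    {b : ι → κ → 𝕜} :
    Orthonormal 𝕜 (fun i => WithLp.toLp 2 (b i)) ↔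
      ∀ i j, star (b i) ⬝ᵥ b j = if i = j then 1 else 0 := by
  simp only [orthonormal_iff_ite, inner_toLp_toLp, dotProduct_comm (b _)]

theorem ciInf_le_sum_div_card {ι : Type*} [Fintype ι] [Nonempty ι] (f : ι → ℝ) :
    ⨅ i, f i ≤ (∑ i, f i) / Fintype.card ι := by
  rw [le_div_iff₀ (by positivity)]
  have := Finset.card_nsmul_le_sum Finset.univ f (⨅ i, f i)
    fun i _ => ciInf_le (Finite.bddBelow_range f) i
  simpa [nsmul_eq_mul, mul_comm] using this

theorem mul_sub_div_add_le_mul_sub_div_add {k d m T T' : ℝ} (hd : 0 < d) (hk : k ≤ d)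
    (hT : T ≤ T') : k * (m - T) / d + T ≤ k * (m - T') / d + T' := by
  have hkd : k / d ≤ 1 := (div_le_one hd).2 hk
  have key : k * (m - T') / d + T' - (k * (m - T) / d + T) = (T' - T) * (1 - k / d) := by
    field_simp
    ring
  nlinarith

section Overlaps

variable {d m : ℕ} {e : Fin m → Fin d → Fin d → ℂ}

theorem sum_sq_norm_overlap_eq_one
    (honb : ∀ z a b, star (e z a) ⬝ᵥ e z b = (if a = b then (1 : ℂ) else 0))
    (z z' : Fin m) (a : Fin d) : ∑ a' : Fin d, ‖star (e z a) ⬝ᵥ e z' a'‖ ^ 2 = 1 := by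
  have ho : ∀ z, Orthonormal ℂ (fun a => WithLp.toLp 2 (e z a)) :=
    fun z => orthonormal_toLp_iff.2 (honb z)
  have hpars := (ho z').sum_sq_norm_inner_left_of_card_eq_finrank (by simp)
    (WithLp.toLp 2 (e z a))
  simpa only [inner_toLp_toLp, dotProduct_comm (e z' _), (ho z).1 a, one_pow] using hpars

theorem sum_sq_norm_overlap_pairs_eq
    (honb : ∀ z a b, star (e z a) ⬝ᵥ e z b = (if a = b then (1 : ℂ) else 0))
    (z z' : Fin m) : ∑ q : Fin d × Fin d, ‖star (e z q.1) ⬝ᵥ e z' q.2‖ ^ 2 = d := by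
  simp [Fintype.sum_prod_type, sum_sq_norm_overlap_eq_one honb]

theorem cminP_le (hd : 0 < d)
    (honb : ∀ z a b, star (e z a) ⬝ᵥ e z b = (if a = b then (1 : ℂ) else 0))
    (z z' : Fin m) : cminP d m e z z' ≤ 1 / d := by
  have : NeZero d := ⟨hd.ne'⟩
  calc cminP d m e z z' ≤ (∑ q : Fin d × Fin d, ‖star (e z q.1) ⬝ᵥ e z' q.2‖ ^ 2) /
        Fintype.card (Fin d × Fin d) := ciInf_le_sum_div_card _
    _ = 1 / d := by
        rw [sum_sq_norm_overlap_pairs_eq honb, Fintype.card_prod, Fintype.card_fin]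
        push_cast
        field_simp

theorem one_le_sum_norm_pow_four (hd : 0 < d)
    (honb : ∀ z a b, star (e z a) ⬝ᵥ e z b = (if a = b then (1 : ℂ) else 0))
    (z z' : Fin m) : 1 ≤ ∑ a : Fin d, ∑ a' : Fin d, ‖star (e z a) ⬝ᵥ e z' a'‖ ^ 4 := by
  have hcs := sq_sum_le_card_mul_sum_sq (s := Finset.univ)
    (f := fun q : Fin d × Fin d => ‖star (e z q.1) ⬝ᵥ e z' q.2‖ ^ 2)
  simp only [sum_sq_norm_overlap_pairs_eq honb, Finset.card_univ, Fintype.card_prod,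
    Fintype.card_fin, ← pow_mul, Fintype.sum_prod_type] at hcs
  push_cast at hcs
  have hd2 : (0 : ℝ) < d * d := by positivity
  nlinarith

theorem GP_nonneg (hd : 0 < d)
    (honb : ∀ z a b, star (e z a) ⬝ᵥ e z b = (if a = b then (1 : ℂ) else 0))
    (z z' : Fin m) : 0 ≤ GP d m e z z' := by
  have hcmin := mul_le_mul_of_nonneg_left (cminP_le hd honb z z')
    (by positivity : (0 : ℝ) ≤ d + 1)
  have hS4 := mul_le_mul_of_nonneg_left (one_le_sum_norm_pow_four hd honb z z')
    (by positivity : (0 : ℝ) ≤ 1 / d)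
  have hsplit : ((d : ℝ) + 1) * (1 / d) = 1 + 1 / d := by field_simp
  unfold GP
  linarith

theorem cminP_of_unbiased (hd : 0 < d) {z z' : Fin m}
    (h : ∀ a a' : Fin d, ‖star (e z a) ⬝ᵥ e z' a'‖ ^ 2 = 1 / d) : cminP d m e z z' = 1 / d := by
  have : NeZero d := ⟨hd.ne'⟩
  simp only [cminP, h, ciInf_const]

theorem GP_of_unbiased (hd : 0 < d) {z z' : Fin m}
    (h : ∀ a a' : Fin d, ‖star (e z a) ⬝ᵥ e z' a'‖ ^ 2 = 1 / d) : GP d m e z z' = 0 := by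
  have h4 : ∀ a a' : Fin d, ‖star (e z a) ⬝ᵥ e z' a'‖ ^ 4 = (1 / d) ^ 2 := fun a a' => by
    rw [← h a a', ← pow_mul]
  simp only [GP, cminP_of_unbiased hd h, h4, Finset.sum_const, Finset.card_univ,
    Fintype.card_fin, nsmul_eq_mul]
  field_simp
  ring

end Overlaps

theorem one_le_lamC {d m : ℕ} {e : Fin m → Fin d → Fin d → ℂ}
    (hG : ∀ z z', z ≠ z' → 0 ≤ GP d m e z z') : 1 ≤ lamC d m e := by
  have hsum : 0 ≤ ∑ z : Fin m, ∑ z' : Fin m, if z = z' then 0 else GP d m e z z' :=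
    Finset.sum_nonneg fun z _ => Finset.sum_nonneg fun z' _ => by
      split_ifs with hzz
      exacts [le_rfl, hG z z' hzz]
  have hsqrt : 1 ≤ Real.sqrt (1 + 2 * d *
      ∑ z : Fin m, ∑ z' : Fin m, if z = z' then 0 else GP d m e z z') :=
    Real.one_le_sqrt.2 (by nlinarith [(Nat.cast_nonneg d : (0 : ℝ) ≤ d)])
  unfold lamC
  linarith

theorem lamC_eq_one {d m : ℕ} {e : Fin m → Fin d → Fin d → ℂ}
    (hG : ∀ z z', z ≠ z' → GP d m e z z' = 0) : lamC d m e = 1 := by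
  have hsum : (∑ z : Fin m, ∑ z' : Fin m, if z = z' then 0 else GP d m e z z') = 0 :=
    Finset.sum_eq_zero fun z _ => Finset.sum_eq_zero fun z' _ => by
      split_ifs with hzz
      exacts [rfl, hG z z' hzz]
  simp only [lamC, hsum]
  norm_num

/-- Corollary 1 (MUBs give the tightest bound): `λ(C) ≥ 1` always; if the bases are pairwise
mutually unbiased then `λ(C) = 1` and `T(C) = 1`; consequently for every `1 ≤ k ≤ d` the
bound `B_k = k(m − T(C))/d + T(C)` satisfies `B_k ≥ k(m−1)/d + 1`, with equality for
pairwise mutually unbiased bases. -/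
theorem stmt8 (d m : ℕ) (hd : 2 ≤ d) (hm : 2 ≤ m)
    (e : Fin m → Fin d → Fin d → ℂ)
    (honb : ∀ z a b, star (e z a) ⬝ᵥ e z b = (if a = b then (1 : ℂ) else 0)) :
    1 ≤ lamC d m e ∧
    ((∀ z z' : Fin m, z ≠ z' → ∀ a a' : Fin d,
        ‖star (e z a) ⬝ᵥ e z' a'‖ ^ 2 = 1 / d) →
      lamC d m e = 1 ∧ TCval d m e = 1) ∧
    (∀ k : ℕ, 1 ≤ k → k ≤ d →
      ((k : ℝ) * ((m : ℝ) - 1) / d + 1 ≤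
          (k : ℝ) * ((m : ℝ) - TCval d m e) / d + TCval d m e ∧
        ((∀ z z' : Fin m, z ≠ z' → ∀ a a' : Fin d,
            ‖star (e z a) ⬝ᵥ e z' a'‖ ^ 2 = 1 / d) →
          (k : ℝ) * ((m : ℝ) - TCval d m e) / d + TCval d m e =
            (k : ℝ) * ((m : ℝ) - 1) / d + 1))) := by
  have hd0 : 0 < d := by omega
  have hm1 : (1 : ℝ) ≤ m := by exact_mod_cast (by omega : 1 ≤ m)
  have hlam : 1 ≤ lamC d m e := one_le_lamC fun z z' _ => GP_nonneg hd0 honb z z'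
  have hmub : (∀ z z' : Fin m, z ≠ z' → ∀ a a' : Fin d,
      ‖star (e z a) ⬝ᵥ e z' a'‖ ^ 2 = 1 / d) → lamC d m e = 1 ∧ TCval d m e = 1 := fun h => by
    have hlam1 : lamC d m e = 1 := lamC_eq_one fun z z' hzz => GP_of_unbiased hd0 (h z z' hzz)
    exact ⟨hlam1, by rw [TCval, hlam1, min_eq_left hm1]⟩
  refine ⟨hlam, hmub, fun k _ hk => ⟨?_, fun h => by rw [(hmub h).2]⟩⟩
  exact mul_sub_div_add_le_mul_sub_div_add (by positivity) (by exact_mod_cast hk)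
    (le_min hlam hm1)
end

section
/- (Proposition 3, constrained fourth-moment maximization.) Let d ≥ 1 be an integer, let 0 ≤ c_min ≤ c_max ≤ 1 be reals, and let x ∈ ℝ^{d²} satisfy Σ_{i=jd+1}^{jd+d} x_i² = 1 for each j = 0,…,d−1 and √c_min ≤ x_i ≤ √c_max for all i. Then Σ_{i=1}^{d²} x_i⁴ ≤ d·[ L c_max² + (d − L − 1) c_min² + (1 − L c_max − (d − L − 1) c_min)² ], where L = ⌊(1 − c_min d)/(c_max − c_min)⌋ if c_max > c_min and L = d if c_max = c_min. -/
open BigOperators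

/-- The optimal value `L` from Proposition 3: `L = ⌊(1 − c_min d)/(c_max − c_min)⌋` if
`c_max > c_min`, and `L = d` if `c_max = c_min`. -/
noncomputable def Lval (d : ℕ) (cmin cmax : ℝ) : ℝ :=
  if cmin < cmax then ((⌊(1 - cmin * d) / (cmax - cmin)⌋ : ℤ) : ℝ) else (d : ℝ)

/-- `Ω = L c_max² + (d − L − 1) c_min² + (1 − L c_max − (d − L − 1) c_min)²`. -/
noncomputable def Omegaval (d : ℕ) (cmin cmax : ℝ) : ℝ :=
  Lval d cmin cmax * cmax ^ 2 + ((d : ℝ) - Lval d cmin cmax - 1) * cmin ^ 2 +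
    (1 - Lval d cmin cmax * cmax - ((d : ℝ) - Lval d cmin cmax - 1) * cmin) ^ 2

/-!
Put `y_i = x_i²`; each block of `y` lies in `[a, b] = [c_min, c_max]` and sums to `1`.
With `c = b - a` and `y_i = a + c v_i`, `v_i ∈ [0, 1]`, one has
`∑ y_i² = (a + b) - d a b - c² ∑ v_i (1 - v_i)`, so one must bound `∑ v_i (1 - v_i)` from below
at fixed `T = ∑ v_i`. Since `g t = fract t (1 - fract t)` satisfies `g (t + v) ≤ g t + v (1 - v)`
for `v ∈ [0, 1]`, that sum is at least `g T`; equality holds with `⌊T⌋` of the `v_i` equal to `1`,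
one equal to `fract T` and the rest `0`, which is the configuration defining `Ω` with `L = ⌊T⌋`.
-/

open Int in
theorem fract_add_mul_one_sub_fract_le (t v : ℝ) (hv₀ : 0 ≤ v) (hv₁ : v ≤ 1) :
    fract (t + v) * (1 - fract (t + v)) ≤ fract t * (1 - fract t) + v * (1 - v) := by
  have hf₀ := fract_nonneg t
  have hf₁ := fract_lt_one t
  rcases lt_or_ge (fract t + v) 1 with hlt | hge
  · have hfract : fract (t + v) = fract t + v :=
      fract_eq_iff.2 ⟨by linarith, hlt, ⌊t⌋, by linarith [self_sub_fract t]⟩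
    rw [hfract]
    nlinarith
  · have hfract : fract (t + v) = fract t + v - 1 :=
      fract_eq_iff.2
        ⟨by linarith, by linarith, ⌊t⌋ + 1, by push_cast; linarith [self_sub_fract t]⟩
    rw [hfract]
    nlinarith [mul_nonneg (sub_nonneg.2 hf₁.le) (sub_nonneg.2 hv₁)]

open Int in
theorem fract_sum_mul_one_sub_fract_le {ι : Type*} (s : Finset ι) (v : ι → ℝ)
    (hv : ∀ i ∈ s, 0 ≤ v i ∧ v i ≤ 1) :
    fract (∑ i ∈ s, v i) * (1 - fract (∑ i ∈ s, v i)) ≤ ∑ i ∈ s, v i * (1 - v i) := by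
  induction s using Finset.cons_induction with
  | empty => simp
  | cons a s ha ih =>
    obtain ⟨hv₀, hv₁⟩ := hv a (Finset.mem_cons_self a s)
    rw [Finset.sum_cons, Finset.sum_cons, add_comm (v a)]
    linarith [fract_add_mul_one_sub_fract_le (∑ i ∈ s, v i) (v a) hv₀ hv₁,
      ih fun i hi => hv i (Finset.mem_cons_of_mem hi)]

theorem Omegaval_eq_of_lt (d : ℕ) {a b : ℝ} (hab : a < b) :
    Omegaval d a b = a + b - d * a * b - (b - a) ^ 2 *
      (Int.fract ((1 - a * d) / (b - a)) * (1 - Int.fract ((1 - a * d) / (b - a)))) := by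
  set T := (1 - a * d) / (b - a)
  have hT : (b - a) * T = 1 - a * d := mul_div_cancel₀ _ (sub_pos.2 hab).ne'
  rw [Omegaval, Lval, if_pos hab, Int.fract]
  linear_combination ((b - a) - (b - a) * (T - ⌊T⌋) - (1 - a * d - (b - a) * ⌊T⌋)) * hT

theorem Omegaval_self (d : ℕ) (a : ℝ) (hda : d * a = 1) : Omegaval d a a = d * a ^ 2 := by
  rw [Omegaval, Lval, if_neg (lt_irrefl a)]
  linear_combination (-(1 - d * a + 2 * a)) * hda

theorem sum_sq_le_Omegaval {ι : Type*} [Fintype ι] {a b : ℝ} (hab : a ≤ b) (y : ι → ℝ)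
    (hsum : ∑ i, y i = 1) (hy : ∀ i, a ≤ y i ∧ y i ≤ b) :
    ∑ i, y i ^ 2 ≤ Omegaval (Fintype.card ι) a b := by
  set d := Fintype.card ι
  rcases hab.lt_or_eq with hlt | rfl
  · have hc : 0 < b - a := sub_pos.2 hlt
    set v : ι → ℝ := fun i => (y i - a) / (b - a)
    have hy_eq : ∀ i, y i = a + (b - a) * v i := fun i => by
      simp only [v]; field_simp; ring
    have hv : ∀ i ∈ Finset.univ, 0 ≤ v i ∧ v i ≤ 1 := fun i _ =>
      ⟨div_nonneg (by linarith [(hy i).1]) hc.le,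
        (div_le_one hc).2 (by linarith [(hy i).2])⟩
    have hv_sum : ∑ i, v i = (1 - a * d) / (b - a) := by
      simp only [v, ← Finset.sum_div, Finset.sum_sub_distrib, hsum, Finset.sum_const,
        Finset.card_univ, nsmul_eq_mul, d, mul_comm]
    have hsq : ∑ i, y i ^ 2 = a + b - d * a * b - (b - a) ^ 2 * ∑ i, v i * (1 - v i) := by
      have hpt : ∀ i, y i ^ 2 = (a + b) * y i - a * b - (b - a) ^ 2 * (v i * (1 - v i)) :=
        fun i => by rw [hy_eq i]; ring
      simp only [hpt, Finset.sum_sub_distrib, ← Finset.mul_sum, hsum, Finset.sum_const,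
        Finset.card_univ, nsmul_eq_mul, d]
      ring
    rw [hsq, Omegaval_eq_of_lt d hlt, ← hv_sum]
    gcongr
    exact fract_sum_mul_one_sub_fract_le Finset.univ v hv
  · have hy_eq : ∀ i, y i = a := fun i => le_antisymm (hy i).2 (hy i).1
    simp only [hy_eq, Finset.sum_const, Finset.card_univ, nsmul_eq_mul] at hsum ⊢
    rw [Omegaval_self d a hsum]

theorem stmt9_general (d : ℕ) (cmin cmax : ℝ)
    (h0 : 0 ≤ cmin) (h1 : cmin ≤ cmax)
    (x : Fin d → Fin d → ℝ)
    (hnorm : ∀ j, ∑ i, x j i ^ 2 = 1)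
    (hbound : ∀ j i, Real.sqrt cmin ≤ x j i ∧ x j i ≤ Real.sqrt cmax) :
    ∑ j, ∑ i, x j i ^ 4 ≤ (d : ℝ) * Omegaval d cmin cmax := by
  have hsq : ∀ j i, cmin ≤ x j i ^ 2 ∧ x j i ^ 2 ≤ cmax := fun j i => by
    obtain ⟨hl, hu⟩ := hbound j i
    have hx₀ : 0 ≤ x j i := (Real.sqrt_nonneg _).trans hl
    exact ⟨(Real.sqrt_le_left hx₀).1 hl, (Real.le_sqrt hx₀ (h0.trans h1)).1 hu⟩
  have hblock : ∀ j, ∑ i, x j i ^ 4 ≤ Omegaval d cmin cmax := fun j => by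
    simpa only [← pow_mul, Fintype.card_fin] using
      sum_sq_le_Omegaval h1 (fun i => x j i ^ 2) (hnorm j) (hsq j)
  simpa using Finset.sum_le_card_nsmul Finset.univ _ _ fun j _ => hblock j

/-- Proposition 3 (constrained fourth-moment maximization): if `x ∈ ℝ^{d²}` (indexed here
as `d` blocks of `d` coordinates) satisfies `Σ_{i ∈ block j} x_i² = 1` for each block `j`
and `√c_min ≤ x_i ≤ √c_max` for all `i`, where `0 ≤ c_min ≤ c_max ≤ 1`, then
`Σ_i x_i⁴ ≤ d·[L c_max² + (d−L−1)c_min² + (1 − L c_max − (d−L−1)c_min)²]`. -/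
theorem stmt9 (d : ℕ) (hd : 1 ≤ d) (cmin cmax : ℝ)
    (h0 : 0 ≤ cmin) (h1 : cmin ≤ cmax) (h2 : cmax ≤ 1)
    (x : Fin d → Fin d → ℝ)
    (hnorm : ∀ j, ∑ i, x j i ^ 2 = 1)
    (hbound : ∀ j i, Real.sqrt cmin ≤ x j i ∧ x j i ≤ Real.sqrt cmax) :
    ∑ j, ∑ i, x j i ^ 4 ≤ (d : ℝ) * Omegaval d cmin cmax :=
  stmt9_general d cmin cmax h0 h1 x hnorm hbound
end
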